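/- Let A be a unital algebra over ℂ, M a unital A-bimodule, and m, n positive integers with m ≠ n. Let δ : A → M be an (m,n)-Jordan derivable mapping at zero with δ(1) = 0, and let P be an idempotent in A. Then for every A ∈ A, (m+n)·δ(AP + PA) = 2m·δ(A)·P + 2n·P·δ(A). -/

import Mathlib

/-!
Applying the hypothesis to an idempotent `E` and `1 - E` gives
`(m+n)·δ(E) = 2m·δ(E)·E + 2n·E·δ(E)`. On the four Peirce pieces of `M` with respect to `E` the
right-hand side acts by `0, 2m, 2n, 2(m+n)`, none of which equals `m + n`, so `δ(E) = 0`.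
Both sides of the claim are additive in `a`, so it suffices to check it on the Peirce components
`P a P`, `P a (1-P)`, `(1-P) a P`, `(1-P) a (1-P)`. The diagonal ones are orthogonal to `1 - P`
resp. `P`; an off-diagonal `x` squares to zero and `P + x` (resp. `1 - P + x`) is again an
idempotent, to which the first identity applies.
-/

open MulOpposite

universe u v

section JordanMul

variable {A : Type u} {M : Type v} [Ring A] [AddCommGroup M] [Module A M] [Module Aᵐᵒᵖ M]

def jordanMul (m n : ℕ) (Q : A) : M →+ M :=
  (2 * m) • DistribSMul.toAddMonoidHom M (op Q) + (2 * n) • DistribSMul.toAddMonoidHom M Q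

lemma jordanMul_apply (m n : ℕ) (Q : A) (u : M) :
    jordanMul m n Q u = (2 * m) • (op Q • u) + (2 * n) • (Q • u) := rfl

lemma jordanMul_add (m n : ℕ) (Q R : A) (u : M) :
    jordanMul m n (Q + R) u = jordanMul m n Q u + jordanMul m n R u := by
  simp only [jordanMul_apply, op_add, add_smul, smul_add]
  abel

lemma jordanMul_one_sub (m n : ℕ) (Q : A) (u : M) :
    jordanMul m n (1 - Q) u = (2 * (m + n)) • u - jordanMul m n Q u := by
  simp only [jordanMul_apply, op_sub, op_one, sub_smul, one_smul, smul_sub, mul_add, add_smul]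
  abel

lemma eq_zero_of_nsmul_eq_nsmul [IsAddTorsionFree M] {m n : ℕ} (hmn : m ≠ n) {u : M}
    (h : m • u = n • u) : u = 0 := by
  by_contra hu
  have hz : (m : ℤ) • u = (n : ℤ) • u := by simpa only [natCast_zsmul] using h
  exact hmn (by exact_mod_cast smul_left_injective ℤ hu hz)

lemma eq_zero_of_nsmul_eq_jordanMul [SMulCommClass A Aᵐᵒᵖ M] [IsAddTorsionFree M] {m n : ℕ}
    (hmn : m ≠ n) {P : A} (hP : IsIdempotentElem P) {u : M}
    (h : (m + n) • u = jordanMul m n P u) : u = 0 := by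
  have hPP : ∀ v : M, P • P • v = P • v := fun v => by rw [← mul_smul, hP.eq]
  have hRR : ∀ v : M, op P • op P • v = op P • v := fun v => by rw [← mul_smul, ← op_mul, hP.eq]
  have hL : (m + n) • (P • u) = (2 * m) • (P • op P • u) + (2 * n) • (P • u) := by
    simpa only [jordanMul_apply, smul_add, smul_comm P, hPP] using congrArg (P • ·) h
  have hR : (m + n) • (op P • u) = (2 * m) • (op P • u) + (2 * n) • (P • op P • u) := by
    simpa only [jordanMul_apply, smul_add, smul_comm (op P), smul_comm P (op P), hRR]
      using congrArg (op P • ·) h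
  have hLR : (m + n) • (P • op P • u) = (2 * (m + n)) • (P • op P • u) := by
    simpa only [smul_add, smul_comm P, hPP, mul_add, add_smul] using congrArg (P • ·) hR
  have hmn0 : m + n ≠ 0 := by omega
  have hc : P • op P • u = 0 := eq_zero_of_nsmul_eq_nsmul (by omega) hLR
  rw [hc, smul_zero, zero_add] at hL
  rw [hc, smul_zero, add_zero] at hR
  have hl : P • u = 0 := eq_zero_of_nsmul_eq_nsmul (by omega) hL
  have hr : op P • u = 0 := eq_zero_of_nsmul_eq_nsmul (by omega) hR
  rw [jordanMul_apply, hl, hr, smul_zero, smul_zero, add_zero] at h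
  exact (nsmul_eq_zero_iff_right hmn0).mp h

def IsJordanDerivableAtZero (m n : ℕ) (δ : A →+ M) : Prop :=
  ∀ X Y : A, X * Y = 0 → Y * X = 0 →
    (m + n) • δ (X * Y + Y * X) = jordanMul m n Y (δ X) + jordanMul m n X (δ Y)

namespace IsJordanDerivableAtZero

variable {m n : ℕ} {δ : A →+ M} (hδ : IsJordanDerivableAtZero m n δ)
include hδ

lemma jordanMul_map_eq_zero_of_mul_eq_zero {Q x : A} (hQ : δ Q = 0) (hxQ : x * Q = 0) (hQx : Q * x = 0) :
    jordanMul m n Q (δ x) = 0 := by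
  simpa [hxQ, hQx, hQ] using (hδ x Q hxQ hQx).symm

lemma jordanMul_map_peirce_zero_zero {P : A} (hP : IsIdempotentElem P) (hP0 : δ P = 0) (a : A) :
    jordanMul m n P (δ ((1 - P) * a * (1 - P))) = 0 :=
  hδ.jordanMul_map_eq_zero_of_mul_eq_zero hP0
    (by simp [mul_sub, sub_mul, mul_assoc, hP.eq])
    (by simp [mul_sub, sub_mul, mul_assoc, hP.mul_self_mul])

lemma jordanMul_map_peirce_one_one (h1 : δ 1 = 0) {P : A} (hP : IsIdempotentElem P)
    (hP0 : δ P = 0) (a : A) :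
    jordanMul m n P (δ (P * a * P)) = (2 * (m + n)) • δ (P * a * P) := by
  have h := hδ.jordanMul_map_eq_zero_of_mul_eq_zero (Q := 1 - P) (x := P * a * P)
    (by rw [map_sub, h1, hP0, sub_zero])
    (by simp [mul_sub, mul_assoc, hP.eq])
    (by simp [sub_mul, mul_assoc, hP.mul_self_mul])
  rw [jordanMul_one_sub, sub_eq_zero] at h
  exact h.symm

variable [IsAddTorsionFree M]

lemma jordanMul_map_self_of_mul_self_eq_zero {x : A} (hx : x * x = 0) : jordanMul m n x (δ x) = 0 := by
  have h := hδ x x hx hx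
  rw [hx, add_zero, map_zero, smul_zero, ← two_nsmul] at h
  exact (nsmul_eq_zero_iff_right two_ne_zero).mp h.symm

lemma nsmul_map_of_isIdempotentElem (h1 : δ 1 = 0) {E : A} (hE : IsIdempotentElem E) :
    (m + n) • δ E = jordanMul m n E (δ E) := by
  have h := hδ E (1 - E) hE.mul_one_sub_self hE.one_sub_mul_self
  rw [hE.mul_one_sub_self, hE.one_sub_mul_self, add_zero, map_zero, smul_zero, map_sub, h1,
    zero_sub, map_neg, jordanMul_one_sub] at h
  refine nsmul_right_injective two_ne_zero ?_
  linear_combination (norm := module) -h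

lemma map_eq_zero_of_isIdempotentElem [SMulCommClass A Aᵐᵒᵖ M] (hmn : m ≠ n) (h1 : δ 1 = 0) {E : A}
    (hE : IsIdempotentElem E) : δ E = 0 :=
  eq_zero_of_nsmul_eq_jordanMul hmn hE (hδ.nsmul_map_of_isIdempotentElem h1 hE)

lemma nsmul_map_of_mul_eq_self_of_mul_eq_zero (h1 : δ 1 = 0) {Q x : A} (hQ : IsIdempotentElem Q) (hQ0 : δ Q = 0)
    (hQx : Q * x = x) (hxQ : x * Q = 0) : (m + n) • δ x = jordanMul m n Q (δ x) := by
  have hxx : x * x = 0 :=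
    calc x * x = x * Q * x := by rw [mul_assoc, hQx]
      _ = 0 := by rw [hxQ, zero_mul]
  have hE : IsIdempotentElem (Q + x) := by
    rw [IsIdempotentElem, add_mul, mul_add, mul_add, hQ.eq, hQx, hxQ, hxx, add_zero, add_zero]
  have h := hδ.nsmul_map_of_isIdempotentElem h1 hE
  rwa [map_add, hQ0, zero_add, jordanMul_add, hδ.jordanMul_map_self_of_mul_self_eq_zero hxx, add_zero] at h

lemma jordanMul_map_peirce_one_zero (h1 : δ 1 = 0) {P : A} (hP : IsIdempotentElem P)
    (hP0 : δ P = 0) (a : A) :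
    jordanMul m n P (δ (P * a * (1 - P))) = (m + n) • δ (P * a * (1 - P)) :=
  (hδ.nsmul_map_of_mul_eq_self_of_mul_eq_zero h1 hP hP0
    (by simp [mul_sub, mul_assoc, hP.mul_self_mul])
    (by simp [mul_sub, sub_mul, mul_assoc, hP.eq])).symm

lemma jordanMul_map_peirce_zero_one (h1 : δ 1 = 0) {P : A} (hP : IsIdempotentElem P)
    (hP0 : δ P = 0) (a : A) :
    jordanMul m n P (δ ((1 - P) * a * P)) = (m + n) • δ ((1 - P) * a * P) := by
  have h := hδ.nsmul_map_of_mul_eq_self_of_mul_eq_zero h1 hP.one_sub (x := (1 - P) * a * P)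
    (by rw [map_sub, h1, hP0, sub_zero])
    (by simp [mul_sub, sub_mul, mul_assoc, hP.mul_self_mul])
    (by simp [mul_sub, sub_mul, mul_assoc, hP.eq])
  rw [jordanMul_one_sub] at h
  linear_combination (norm := module) h

lemma nsmul_map_mul_add_mul [SMulCommClass A Aᵐᵒᵖ M] (hmn : m ≠ n) (h1 : δ 1 = 0) {P : A}
    (hP : IsIdempotentElem P) (a : A) :
    (m + n) • δ (a * P + P * a) = jordanMul m n P (δ a) := by
  have hP0 := hδ.map_eq_zero_of_isIdempotentElem hmn h1 hP
  have ha : a = P * a * P + P * a * (1 - P) + (1 - P) * a * P + (1 - P) * a * (1 - P) := by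
    noncomm_ring
  have haP : a * P + P * a = 2 • (P * a * P) + P * a * (1 - P) + (1 - P) * a * P := by
    noncomm_ring
  conv_rhs => rw [ha]
  rw [haP]
  simp only [map_add, map_nsmul]
  rw [hδ.jordanMul_map_peirce_one_one h1 hP hP0, hδ.jordanMul_map_peirce_one_zero h1 hP hP0,
    hδ.jordanMul_map_peirce_zero_one h1 hP hP0, hδ.jordanMul_map_peirce_zero_zero hP hP0]
  module

end IsJordanDerivableAtZero

end JordanMul

theorem mn_jordan_derivable_at_zero_idempotent_identity_general
    {A M : Type*} [Ring A]
    [AddCommGroup M] [Module ℂ M] [Module A M] [Module Aᵐᵒᵖ M]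
    [SMulCommClass A Aᵐᵒᵖ M]
    (m n : ℕ) (hmn : m ≠ n)
    (δ : A → M) (hadd : ∀ a b : A, δ (a + b) = δ a + δ b)
    (hδ1 : δ 1 = 0)
    (hzero : ∀ X Y : A, X * Y = 0 → Y * X = 0 →
      (m + n) • δ (X * Y + Y * X) =
        (2 * m) • (op Y • δ X) + (2 * m) • (op X • δ Y)
          + (2 * n) • (X • δ Y) + (2 * n) • (Y • δ X))
    (P : A) (hP : P * P = P) (a : A) :
    (m + n) • δ (a * P + P * a) = (2 * m) • (op P • δ a) + (2 * n) • (P • δ a) := by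
  have : IsAddTorsionFree M := .of_isTorsionFree ℂ M
  let δ' : A →+ M := AddMonoidHom.mk' δ hadd
  have hδ' : IsJordanDerivableAtZero m n δ' := fun X Y hXY hYX => by
    change (m + n) • δ (X * Y + Y * X) = jordanMul m n Y (δ X) + jordanMul m n X (δ Y)
    rw [hzero X Y hXY hYX, jordanMul_apply, jordanMul_apply]
    abel
  exact hδ'.nsmul_map_mul_add_mul hmn hδ1 hP a

/-- `(m+n)·δ(AP+PA) = 2m·δ(A)·P + 2n·P·δ(A)` for every idempotent `P`. -/
theorem mn_jordan_derivable_at_zero_idempotent_identity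
    {A M : Type*} [Ring A] [Algebra ℂ A]
    [AddCommGroup M] [Module ℂ M] [Module A M] [Module Aᵐᵒᵖ M]
    [SMulCommClass A Aᵐᵒᵖ M]
    (m n : ℕ) (hm : 0 < m) (hn : 0 < n) (hmn : m ≠ n)
    (δ : A → M) (hadd : ∀ a b : A, δ (a + b) = δ a + δ b)
    (hδ1 : δ 1 = 0)
    (hzero : ∀ X Y : A, X * Y = 0 → Y * X = 0 →
      (m + n) • δ (X * Y + Y * X) =
        (2 * m) • (op Y • δ X) + (2 * m) • (op X • δ Y)
          + (2 * n) • (X • δ Y) + (2 * n) • (Y • δ X))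
    (P : A) (hP : P * P = P) (a : A) :
    (m + n) • δ (a * P + P * a) = (2 * m) • (op P • δ a) + (2 * n) • (P • δ a) :=
  mn_jordan_derivable_at_zero_idempotent_identity_general m n hmn δ hadd hδ1 hzero P hP a
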